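/- arXiv:1802.03188 — 5 statements merged into one kernel-verified Lean document; each statement's English description precedes it below -/
import Mathlib

section
/- Let H1, H2, H3 be Hilbert spaces (or finite-dimensional complex inner product spaces). Suppose ψ ∈ H1, ψ' ∈ H2 ⊗ H3, φ ∈ H2, φ' ∈ H1 ⊗ H3 satisfy ψ ⊗ ψ' = φ ⊗ φ' ≠ 0 (after the canonical reassociation identifying H1 ⊗ (H2 ⊗ H3) with H2 ⊗ (H1 ⊗ H3)). Then there exists η ∈ H3 such that ψ' = φ ⊗ η and φ' = ψ ⊗ η. -/
noncomputable section

def tensVec {ι κ : Type*} [Fintype ι] [Fintype κ]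
    (x : EuclideanSpace ℂ ι) (y : EuclideanSpace ℂ κ) : EuclideanSpace ℂ (ι × κ) :=
  WithLp.toLp 2 (fun p : ι × κ => x p.1 * y p.2)

/-- if `ψ ⊗ ψ' = φ ⊗ φ' ≠ 0` (under the canonical reassociation identifying
`H1 ⊗ (H2 ⊗ H3)` with `H2 ⊗ (H1 ⊗ H3)`, expressed coordinatewise), then there is `η` with
`ψ' = φ ⊗ η` and `φ' = ψ ⊗ η`. -/
theorem stmt0 {α β γ : Type*} [Fintype α] [Fintype β] [Fintype γ]
    (ψ : EuclideanSpace ℂ α) (ψ' : EuclideanSpace ℂ (β × γ))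
    (φ : EuclideanSpace ℂ β) (φ' : EuclideanSpace ℂ (α × γ))
    (heq : ∀ (a : α) (b : β) (c : γ), ψ a * ψ' (b, c) = φ b * φ' (a, c))
    (hne : tensVec ψ ψ' ≠ 0) :
    ∃ η : EuclideanSpace ℂ γ, ψ' = tensVec φ η ∧ φ' = tensVec ψ η := by
  obtain ⟨p, hp⟩ : ∃ p, tensVec ψ ψ' p ≠ 0 := by
    by_contra h
    push_neg at h
    exact hne (PiLp.ext fun q => by simpa using h q)
  obtain ⟨a₀, b₀, c₀⟩ := p
  have hp' : ψ a₀ * ψ' (b₀, c₀) ≠ 0 := by simpa [tensVec] using hp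
  have hψ : ψ a₀ ≠ 0 := left_ne_zero_of_mul hp'
  have hψ' : ψ' (b₀, c₀) ≠ 0 := right_ne_zero_of_mul hp'
  have hφ : φ b₀ ≠ 0 := by
    have := heq a₀ b₀ c₀
    intro h0
    rw [h0, zero_mul] at this
    exact hp' this
  refine ⟨WithLp.toLp 2 (fun c => φ' (a₀, c) / ψ a₀), PiLp.ext fun q => ?_, PiLp.ext fun q => ?_⟩
  · obtain ⟨b, c⟩ := q
    show ψ' (b, c) = φ b * (φ' (a₀, c) / ψ a₀)
    field_simp
    linear_combination heq a₀ b c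
  · obtain ⟨a, c⟩ := q
    show φ' (a, c) = ψ a * (φ' (a₀, c) / ψ a₀)
    field_simp
    refine mul_left_cancel₀ hφ ?_
    linear_combination ψ a * heq a₀ b₀ c - ψ a₀ * heq a b₀ c

end
end

section
/- Let M be the complex vector space of n×n complex matrices, C ⊆ M the set of conjugate-normal matrices (A with A·A* = conj(A*·A), where conj is entrywise complex conjugation), and S the subspace of symmetric matrices (Aᵀ = A). If X is a linear subspace of M with S ⊆ X ⊆ C, then X = S. -/
/-!
For `A ∈ X`, the skew-symmetric part `K = A - Aᵀ` lies in `X` (as `2A` minus a symmetric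
matrix), and so does `K + c • 1` for every scalar `c`. For skew-symmetric `K`, a direct
expansion, using that `conj (Bᴴ * B) = (Bᴴ * B)ᵀ`, gives
`B * Bᴴ - conj (Bᴴ * B) = 2 (c̄ K + c Kᴴ)` for `B = K + c • 1`. Conjugate-normality at
`c = 1` and `c = i` then forces `Kᴴ = -K` and `Kᴴ = K`, so `K = 0` and `A = Aᵀ`.
-/

open scoped Matrix

namespace Matrix

variable {n R : Type*}

def IsConjNormal [Fintype n] [CommSemiring R] [StarRing R] (A : Matrix n n R) : Prop :=
  A * Aᴴ = (Aᴴ * A).map (starRingEnd R)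

lemma IsHermitian.map_starRingEnd [CommSemiring R] [StarRing R] {H : Matrix n n R}
    (hH : H.IsHermitian) : H.map (starRingEnd R) = Hᵀ := by
  conv_rhs => rw [← hH.eq]
  rfl

variable [Fintype n] [DecidableEq n]

lemma add_smul_one_mul_conjTranspose_sub_map [CommRing R] [StarRing R] {K : Matrix n n R}
    (hK : Kᵀ = -K) (c : R) :
    (K + c • 1) * (K + c • 1)ᴴ - ((K + c • 1)ᴴ * (K + c • 1)).map (starRingEnd R) =
      (2 : R) • (star c • K + c • Kᴴ) := by
  have hKH : Kᴴᵀ = -Kᴴ := by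
    rw [← conjTranspose_transpose_eq_transpose_conjTranspose, hK, conjTranspose_neg]
  rw [(isHermitian_conjTranspose_mul_self _).map_starRingEnd]
  simp only [conjTranspose_add, conjTranspose_smul, conjTranspose_one, transpose_mul,
    transpose_add, transpose_smul, transpose_one, hK, hKH]
  simp only [add_mul, mul_add, neg_mul, mul_neg, Matrix.smul_mul, Matrix.mul_smul, one_mul,
    mul_one]
  module

lemma eq_zero_of_forall_isConjNormal_add_smul_one {K : Matrix n n ℂ} (hK : Kᵀ = -K)
    (h : ∀ c : ℂ, (K + c • 1).IsConjNormal) : K = 0 := by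
  have key (c : ℂ) : star c • K + c • Kᴴ = 0 := by
    have := add_smul_one_mul_conjTranspose_sub_map hK c
    rw [sub_eq_zero.mpr (h c), eq_comm, smul_eq_zero] at this
    exact this.resolve_left two_ne_zero
  have h1 := key 1
  have hI := key Complex.I
  simp only [star_one, one_smul, Complex.star_def, Complex.conj_I, neg_smul] at h1 hI
  have hKH : Kᴴ = K := by
    rw [← smul_neg, ← smul_add, smul_eq_zero, neg_add_eq_sub, sub_eq_zero] at hI
    exact hI.resolve_left Complex.I_ne_zero
  rw [hKH, ← two_smul ℂ, smul_eq_zero] at h1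
  exact h1.resolve_left two_ne_zero

end Matrix

/-- if `X` is a subspace of the `n×n` complex matrices squeezed between the
symmetric matrices and the conjugate-normal matrices, then `X` is exactly the symmetric
matrices. -/
theorem stmt2 {n : ℕ} (X : Submodule ℂ (Matrix (Fin n) (Fin n) ℂ))
    (hS : ∀ A : Matrix (Fin n) (Fin n) ℂ, Aᵀ = A → A ∈ X)
    (hC : ∀ A ∈ X, A * Aᴴ = (Aᴴ * A).map (starRingEnd ℂ)) :
    ∀ A : Matrix (Fin n) (Fin n) ℂ, A ∈ X ↔ Aᵀ = A := by
  intro A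
  refine ⟨fun hA => ?_, hS A⟩
  have hskew : (A - Aᵀ)ᵀ = -(A - Aᵀ) := by
    rw [Matrix.transpose_sub, Matrix.transpose_transpose, neg_sub]
  have hsymm : (A + Aᵀ)ᵀ = A + Aᵀ := by
    rw [Matrix.transpose_add, Matrix.transpose_transpose, add_comm]
  have hmem : A - Aᵀ ∈ X := by
    rw [show A - Aᵀ = (2 : ℂ) • A - (A + Aᵀ) by module]
    exact X.sub_mem (X.smul_mem 2 hA) (hS _ hsymm)
  have hzero := Matrix.eq_zero_of_forall_isConjNormal_add_smul_one hskew fun c =>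
    hC _ (X.add_mem hmem (hS _ (by rw [Matrix.transpose_smul, Matrix.transpose_one])))
  exact (sub_eq_zero.mp hzero).symm
end

section
/- Let Q1, Q2 be finite-dimensional Hilbert spaces with Q1 ≅ Q2 via a unitary W : Q2 → Q1, and let V1, V2 be finite-dimensional Hilbert spaces. Unit vectors ψ1 ∈ Q1 ⊗ V1 and ψ2 ∈ Q2 ⊗ V2 satisfy: ψ1 ⊗ ψ2 lies in the fixed-point subspace of the swap-with-transfer operator (W* ⊗ W) ∘ swap acting on the Q1, Q2 factors, if and only if there exist unit vectors ψ1Q ∈ Q1, ψ1Y ∈ V1, ψ2Q ∈ Q2, ψ2Y ∈ V2 with ψ1 = ψ1Q ⊗ ψ1Y, ψ2 = ψ2Q ⊗ ψ2Y, and ψ1Q = W ψ2Q. -/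
/-!
Coordinatewise, `ψ1 ⊗ ψ2` is a fixed point exactly when
`((W ⊗ 1) ψ2)(i, b) * ((W* ⊗ 1) ψ1)(j, a) = ψ1(i, a) * ψ2(j, b)` for all indices.
Freezing `(j, b)` at an entry where `ψ2` does not vanish exhibits `ψ1` as a product vector
whose `Q`-factor is a column of `(W ⊗ 1) ψ2`; symmetrically `ψ2 = x ⊗ y₂`, and then that column is
a multiple of `W x`. Since `W* W = 1`, `W` is an isometry, so rescaling `x` to a unit vector
makes all four factors unit vectors. Conversely, for such product vectors `W* W ψ2Q = ψ2Q` makes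
both sides of the coordinate identity equal.
-/

open scoped Kronecker

noncomputable section

def reindexCLM {ι κ : Type*} [Fintype ι] [Fintype κ] (e : ι ≃ κ) :
    EuclideanSpace ℂ ι →L[ℂ] EuclideanSpace ℂ κ :=
  LinearMap.toContinuousLinearMap
    { toFun := fun f => (WithLp.toLp 2 (fun j => f (e.symm j)) : EuclideanSpace ℂ κ)
      map_add' := fun _ _ => rfl
      map_smul' := fun _ _ => rfl }

def opTensCLM {ι κ μ ν : Type*} [Fintype ι] [Fintype κ] [Fintype μ] [Fintype ν]
    [DecidableEq κ] [DecidableEq ν]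
    (A : EuclideanSpace ℂ κ →L[ℂ] EuclideanSpace ℂ ι)
    (B : EuclideanSpace ℂ ν →L[ℂ] EuclideanSpace ℂ μ) :
    EuclideanSpace ℂ (κ × ν) →L[ℂ] EuclideanSpace ℂ (ι × μ) :=
  LinearMap.toContinuousLinearMap <| Matrix.toEuclideanLin <|
    (Matrix.toEuclideanLin.symm (A : EuclideanSpace ℂ κ →ₗ[ℂ] EuclideanSpace ℂ ι)) ⊗ₖ
      (Matrix.toEuclideanLin.symm (B : EuclideanSpace ℂ ν →ₗ[ℂ] EuclideanSpace ℂ μ))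

def eqOpCLM {q₁ q₂ z : Type*} [Fintype q₁] [Fintype q₂] [Fintype z]
    [DecidableEq q₁] [DecidableEq q₂]
    (V1 : EuclideanSpace ℂ q₁ →L[ℂ] EuclideanSpace ℂ z)
    (V2 : EuclideanSpace ℂ q₂ →L[ℂ] EuclideanSpace ℂ z) :
    EuclideanSpace ℂ (q₁ × q₂) →L[ℂ] EuclideanSpace ℂ (q₁ × q₂) :=
  (reindexCLM (Equiv.prodComm q₂ q₁)).comp
    (opTensCLM ((ContinuousLinearMap.adjoint V2).comp V1)
      ((ContinuousLinearMap.adjoint V1).comp V2))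

def eqSub {q₁ q₂ z : Type*} [Fintype q₁] [Fintype q₂] [Fintype z]
    [DecidableEq q₁] [DecidableEq q₂]
    (V1 : EuclideanSpace ℂ q₁ →L[ℂ] EuclideanSpace ℂ z)
    (V2 : EuclideanSpace ℂ q₂ →L[ℂ] EuclideanSpace ℂ z) :
    Submodule ℂ (EuclideanSpace ℂ (q₁ × q₂)) :=
  LinearMap.ker
    ((eqOpCLM V1 V2 : EuclideanSpace ℂ (q₁ × q₂) →ₗ[ℂ] EuclideanSpace ℂ (q₁ × q₂)) - LinearMap.id)

def eqFull {q₁ y₁ q₂ y₂ z : Type*}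
    [Fintype q₁] [Fintype y₁] [Fintype q₂] [Fintype y₂] [Fintype z]
    [DecidableEq q₁] [DecidableEq q₂] [DecidableEq y₁] [DecidableEq y₂]
    (U1 : EuclideanSpace ℂ q₁ →L[ℂ] EuclideanSpace ℂ z)
    (U2 : EuclideanSpace ℂ q₂ →L[ℂ] EuclideanSpace ℂ z) :
    EuclideanSpace ℂ ((q₁ × y₁) × (q₂ × y₂)) →L[ℂ] EuclideanSpace ℂ ((q₁ × y₁) × (q₂ × y₂)) :=
  (reindexCLM (Equiv.prodProdProdComm q₁ q₂ y₁ y₂)).comp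
    ((opTensCLM (eqOpCLM U1 U2) (ContinuousLinearMap.id ℂ (EuclideanSpace ℂ (y₁ × y₂)))).comp
      (reindexCLM (Equiv.prodProdProdComm q₁ y₁ q₂ y₂)))

def tensRLin {ι κ : Type*} [Fintype ι] [Fintype κ] (ψ : EuclideanSpace ℂ κ) :
    EuclideanSpace ℂ ι →ₗ[ℂ] EuclideanSpace ℂ (ι × κ) where
  toFun φ := tensVec φ ψ
  map_add' x y := by ext p; simp [tensVec, PiLp.add_apply, add_mul]
  map_smul' c x := by ext p; simp [tensVec, PiLp.smul_apply, smul_eq_mul, mul_assoc]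

def tensSpan {ι κ : Type*} [Fintype ι] [Fintype κ]
    (S : Submodule ℂ (EuclideanSpace ℂ ι)) (T : Submodule ℂ (EuclideanSpace ℂ κ)) :
    Submodule ℂ (EuclideanSpace ℂ (ι × κ)) :=
  Submodule.span ℂ {z | ∃ x ∈ S, ∃ y ∈ T, z = tensVec x y}

def spanDiv {ι κ : Type*} [Fintype ι] [Fintype κ]
    (B : Submodule ℂ (EuclideanSpace ℂ (ι × κ))) (ψ : EuclideanSpace ℂ κ) :
    Submodule ℂ (EuclideanSpace ℂ ι) :=
  Submodule.comap (tensRLin ψ) B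

def rankOneCLM {H : Type*} [NormedAddCommGroup H] [InnerProductSpace ℂ H] (ψ : H) :
    H →L[ℂ] H :=
  (innerSL ℂ ψ).smulRight ψ

def ptraceRight {ι κ : Type*} [Fintype ι] [Fintype κ] [DecidableEq ι] [DecidableEq κ]
    (ρ : EuclideanSpace ℂ (ι × κ) →L[ℂ] EuclideanSpace ℂ (ι × κ)) :
    EuclideanSpace ℂ ι →L[ℂ] EuclideanSpace ℂ ι :=
  LinearMap.toContinuousLinearMap <| Matrix.toEuclideanLin <|
    Matrix.of fun i j => ∑ k : κ,
      Matrix.toEuclideanLin.symm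
        (ρ : EuclideanSpace ℂ (ι × κ) →ₗ[ℂ] EuclideanSpace ℂ (ι × κ)) (i, k) (j, k)

def ptraceLeft {ι κ : Type*} [Fintype ι] [Fintype κ] [DecidableEq ι] [DecidableEq κ]
    (ρ : EuclideanSpace ℂ (ι × κ) →L[ℂ] EuclideanSpace ℂ (ι × κ)) :
    EuclideanSpace ℂ κ →L[ℂ] EuclideanSpace ℂ κ :=
  LinearMap.toContinuousLinearMap <| Matrix.toEuclideanLin <|
    Matrix.of fun i j => ∑ k : ι,
      Matrix.toEuclideanLin.symm
        (ρ : EuclideanSpace ℂ (ι × κ) →ₗ[ℂ] EuclideanSpace ℂ (ι × κ)) (k, i) (k, j)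

end


section TensorCoordinates

open EuclideanSpace

lemma toEuclideanLin_symm_apply_apply {ι κ : Type*} [Fintype κ] [DecidableEq κ]
    (A : EuclideanSpace ℂ κ →ₗ[ℂ] EuclideanSpace ℂ ι) (i : ι) (k : κ) :
    Matrix.toEuclideanLin.symm A i k = A (single k 1) i := by
  conv_rhs => rw [← LinearEquiv.apply_symm_apply Matrix.toEuclideanLin A, Matrix.toLpLin_apply]
  simp [Matrix.mulVec, dotProduct, PiLp.single_apply]

lemma apply_eq_sum_single {ι κ : Type*} [Fintype κ] [DecidableEq κ]
    (A : EuclideanSpace ℂ κ →ₗ[ℂ] EuclideanSpace ℂ ι) (x : EuclideanSpace ℂ κ) (i : ι) :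
    A x i = ∑ k, A (single k 1) i * x k := by
  conv_lhs => rw [← LinearEquiv.apply_symm_apply Matrix.toEuclideanLin A, Matrix.toLpLin_apply]
  simp [Matrix.mulVec, dotProduct, toEuclideanLin_symm_apply_apply]

variable {ι κ μ ν : Type*} [Fintype ι] [Fintype κ] [Fintype μ] [Fintype ν]

lemma tensVec_apply (x : EuclideanSpace ℂ ι) (y : EuclideanSpace ℂ κ) (p : ι × κ) :
    tensVec x y p = x p.1 * y p.2 := rfl

lemma tensVec_smul_left (c : ℂ) (x : EuclideanSpace ℂ ι) (y : EuclideanSpace ℂ κ) :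
    tensVec (c • x) y = tensVec x (c • y) := by
  ext p
  simp only [tensVec_apply, PiLp.smul_apply, smul_eq_mul]
  ring

lemma tensVec_inv_smul_smul (x : EuclideanSpace ℂ ι) (y : EuclideanSpace ℂ κ) {c : ℂ}
    (hc : c ≠ 0) : tensVec (c⁻¹ • x) (c • y) = tensVec x y := by
  rw [tensVec_smul_left, inv_smul_smul₀ hc]

lemma norm_tensVec (x : EuclideanSpace ℂ ι) (y : EuclideanSpace ℂ κ) :
    ‖tensVec x y‖ = ‖x‖ * ‖y‖ := by
  rw [EuclideanSpace.norm_eq, EuclideanSpace.norm_eq, EuclideanSpace.norm_eq,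
    ← Real.sqrt_mul (by positivity), Finset.sum_mul_sum, Fintype.sum_prod_type]
  simp [tensVec_apply, mul_pow]

lemma toLp_tensVec_apply_snd (x : EuclideanSpace ℂ ι) (y : EuclideanSpace ℂ κ) (k : κ) :
    (WithLp.toLp 2 fun i => tensVec x y (i, k)) = y k • x := by
  ext i
  simp [tensVec_apply, mul_comm]

lemma single_prod_eq_tensVec [DecidableEq ι] [DecidableEq κ] (i : ι) (k : κ) :
    single (i, k) (1 : ℂ) = tensVec (single i 1) (single k 1) := by
  ext ⟨i', k'⟩
  simp [tensVec_apply, PiLp.single_apply, ← ite_and, and_comm]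

lemma opTensCLM_apply [DecidableEq κ] [DecidableEq ν]
    (A : EuclideanSpace ℂ κ →L[ℂ] EuclideanSpace ℂ ι)
    (B : EuclideanSpace ℂ ν →L[ℂ] EuclideanSpace ℂ μ)
    (F : EuclideanSpace ℂ (κ × ν)) (i : ι) (m : μ) :
    opTensCLM A B F (i, m) = ∑ k, ∑ n, A (single k 1) i * B (single n 1) m * F (k, n) := by
  simp [opTensCLM, Matrix.toLpLin_apply, Matrix.mulVec, dotProduct, Fintype.sum_prod_type,
    toEuclideanLin_symm_apply_apply]

lemma opTensCLM_id_apply [DecidableEq κ] [DecidableEq μ]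
    (A : EuclideanSpace ℂ κ →L[ℂ] EuclideanSpace ℂ ι)
    (F : EuclideanSpace ℂ (κ × μ)) (i : ι) (m : μ) :
    opTensCLM A (.id ℂ _) F (i, m) = ∑ k, A (single k 1) i * F (k, m) := by
  simp [opTensCLM_apply, PiLp.single_apply]

lemma opTensCLM_tensVec [DecidableEq κ] [DecidableEq ν]
    (A : EuclideanSpace ℂ κ →L[ℂ] EuclideanSpace ℂ ι)
    (B : EuclideanSpace ℂ ν →L[ℂ] EuclideanSpace ℂ μ)
    (x : EuclideanSpace ℂ κ) (y : EuclideanSpace ℂ ν) :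
    opTensCLM A B (tensVec x y) = tensVec (A x) (B y) := by
  ext ⟨i, m⟩
  rw [opTensCLM_apply, tensVec_apply, ← ContinuousLinearMap.coe_coe A,
    ← ContinuousLinearMap.coe_coe B, apply_eq_sum_single, apply_eq_sum_single, Finset.sum_mul_sum]
  simp only [tensVec_apply, ContinuousLinearMap.coe_coe]
  exact Finset.sum_congr rfl fun k _ => Finset.sum_congr rfl fun n _ => by ring

end TensorCoordinates

section SwapOperator

open EuclideanSpace ContinuousLinearMap

variable {q₁ y₁ q₂ y₂ : Type*} [Fintype q₁] [Fintype y₁] [Fintype q₂] [Fintype y₂]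
  [DecidableEq q₁] [DecidableEq q₂] [DecidableEq y₁] [DecidableEq y₂]

lemma eqFull_tensVec_apply {z : Type*} [Fintype z]
    (U1 : EuclideanSpace ℂ q₁ →L[ℂ] EuclideanSpace ℂ z)
    (U2 : EuclideanSpace ℂ q₂ →L[ℂ] EuclideanSpace ℂ z)
    (ψ1 : EuclideanSpace ℂ (q₁ × y₁)) (ψ2 : EuclideanSpace ℂ (q₂ × y₂))
    (i : q₁) (a : y₁) (j : q₂) (b : y₂) :
    eqFull U1 U2 (tensVec ψ1 ψ2) ((i, a), (j, b)) =
      opTensCLM (adjoint U1 ∘L U2) (.id ℂ _) ψ2 (i, b) *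
        opTensCLM (adjoint U2 ∘L U1) (.id ℂ _) ψ1 (j, a) := by
  have hEq : ∀ k n, eqOpCLM U1 U2 (single (k, n) 1) (i, j) =
      (adjoint U2 ∘L U1) (single k 1) j * (adjoint U1 ∘L U2) (single n 1) i := by
    intro k n
    simp only [eqOpCLM, comp_apply, single_prod_eq_tensVec, opTensCLM_tensVec]
    rfl
  rw [eqFull, comp_apply, comp_apply]
  change opTensCLM _ _ _ ((i, j), (a, b)) = _
  rw [opTensCLM_id_apply, opTensCLM_id_apply, opTensCLM_id_apply, Finset.sum_mul_sum,
    Fintype.sum_prod_type, Finset.sum_comm]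
  refine Finset.sum_congr rfl fun n _ => Finset.sum_congr rfl fun k _ => ?_
  rw [hEq]
  change _ * (ψ1 (k, a) * ψ2 (n, b)) = _
  ring

lemma eqFull_id_tensVec_eq_self_iff (W : EuclideanSpace ℂ q₂ →L[ℂ] EuclideanSpace ℂ q₁)
    (ψ1 : EuclideanSpace ℂ (q₁ × y₁)) (ψ2 : EuclideanSpace ℂ (q₂ × y₂)) :
    eqFull (.id ℂ _) W (tensVec ψ1 ψ2) = tensVec ψ1 ψ2 ↔ ∀ i a j b,
      opTensCLM W (.id ℂ _) ψ2 (i, b) * opTensCLM (adjoint W) (.id ℂ _) ψ1 (j, a) =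
        ψ1 (i, a) * ψ2 (j, b) := by
  simp [PiLp.ext_iff, eqFull_tensVec_apply, tensVec_apply, adjoint_id]

end SwapOperator

section Factorization

variable {α β γ δ : Type*} [Fintype α] [Fintype β] [Fintype γ] [Fintype δ]

lemma exists_eq_tensVec_of_forall_mul_eq {f : EuclideanSpace ℂ (α × β)}
    {g : EuclideanSpace ℂ (γ × δ)} {f' : EuclideanSpace ℂ (α × δ)} {g' : EuclideanSpace ℂ (γ × β)}
    (h : ∀ i a j b, f' (i, b) * g' (j, a) = f (i, a) * g (j, b)) (hg : g ≠ 0) :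
    ∃ b y, f = tensVec (WithLp.toLp 2 fun i => f' (i, b)) y := by
  obtain ⟨⟨j, b⟩, hjb⟩ : ∃ p, g p ≠ 0 := by
    by_contra! hzero
    exact hg (PiLp.ext hzero)
  refine ⟨b, WithLp.toLp 2 fun a => g' (j, a) / g (j, b), PiLp.ext fun ⟨i, a⟩ => ?_⟩
  rw [tensVec_apply, mul_div_assoc', eq_div_iff hjb]
  exact (h i a j b).symm

variable [DecidableEq α] [DecidableEq β] [DecidableEq γ] [DecidableEq δ]

lemma exists_tensVec_factors_of_forall_mul_eq
    (W : EuclideanSpace ℂ γ →L[ℂ] EuclideanSpace ℂ α)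
    {ψ1 : EuclideanSpace ℂ (α × β)} {ψ2 : EuclideanSpace ℂ (γ × δ)} (hψ1 : ψ1 ≠ 0) (hψ2 : ψ2 ≠ 0)
    (h : ∀ i a j b, opTensCLM W (.id ℂ _) ψ2 (i, b) *
      opTensCLM (ContinuousLinearMap.adjoint W) (.id ℂ _) ψ1 (j, a) = ψ1 (i, a) * ψ2 (j, b)) :
    ∃ x₂ y₁ y₂, ψ1 = tensVec (W x₂) y₁ ∧ ψ2 = tensVec x₂ y₂ := by
  obtain ⟨_, y₂, hψ₂⟩ := exists_eq_tensVec_of_forall_mul_eq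
    (fun j b i a => by rw [mul_comm, h i a j b, mul_comm]) hψ1
  obtain ⟨x₂, rfl⟩ : ∃ x₂, ψ2 = tensVec x₂ y₂ := ⟨_, hψ₂⟩
  obtain ⟨b₀, y₁, hψ₁⟩ := exists_eq_tensVec_of_forall_mul_eq h hψ2
  rw [opTensCLM_tensVec, ContinuousLinearMap.id_apply, toLp_tensVec_apply_snd,
    tensVec_smul_left] at hψ₁
  exact ⟨x₂, _, y₂, hψ₁, rfl⟩

end Factorization

lemma exists_unit_factors_of_norm_tensVec_eq_one {α β γ δ : Type*}
    [Fintype α] [Fintype β] [Fintype γ] [Fintype δ]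
    (W : EuclideanSpace ℂ γ →L[ℂ] EuclideanSpace ℂ α) (hW : ∀ x, ‖W x‖ = ‖x‖)
    (x₂ : EuclideanSpace ℂ γ) (y₁ : EuclideanSpace ℂ β) (y₂ : EuclideanSpace ℂ δ)
    (hψ1 : ‖tensVec (W x₂) y₁‖ = 1) (hψ2 : ‖tensVec x₂ y₂‖ = 1) :
    ∃ (ψ1Q : EuclideanSpace ℂ α) (ψ1Y : EuclideanSpace ℂ β)
      (ψ2Q : EuclideanSpace ℂ γ) (ψ2Y : EuclideanSpace ℂ δ),
      ‖ψ1Q‖ = 1 ∧ ‖ψ1Y‖ = 1 ∧ ‖ψ2Q‖ = 1 ∧ ‖ψ2Y‖ = 1 ∧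
      tensVec (W x₂) y₁ = tensVec ψ1Q ψ1Y ∧ tensVec x₂ y₂ = tensVec ψ2Q ψ2Y ∧ ψ1Q = W ψ2Q := by
  have hx₂ : x₂ ≠ 0 := by rintro rfl; simp [norm_tensVec] at hψ2
  set s : ℂ := (‖x₂‖ : ℂ)
  have hs : s ≠ 0 := by simpa [s] using hx₂
  have hu : ‖s⁻¹ • x₂‖ = 1 := norm_smul_inv_norm hx₂
  have e₁ : tensVec (W x₂) y₁ = tensVec (W (s⁻¹ • x₂)) (s • y₁) := by
    rw [map_smul, tensVec_inv_smul_smul _ _ hs]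
  have e₂ : tensVec x₂ y₂ = tensVec (s⁻¹ • x₂) (s • y₂) := (tensVec_inv_smul_smul _ _ hs).symm
  rw [e₁, norm_tensVec, hW, hu, one_mul] at hψ1
  rw [e₂, norm_tensVec, hu, one_mul] at hψ2
  exact ⟨_, _, _, _, by rw [hW, hu], hψ1, hu, hψ2, e₁, e₂, rfl⟩

theorem stmt12_general {q₁ v₁ q₂ v₂ : Type*}
    [Fintype q₁] [Fintype v₁] [Fintype q₂] [Fintype v₂]
    [DecidableEq q₁] [DecidableEq q₂] [DecidableEq v₁] [DecidableEq v₂]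
    (W : EuclideanSpace ℂ q₂ →L[ℂ] EuclideanSpace ℂ q₁)
    (hW' : (ContinuousLinearMap.adjoint W).comp W =
      ContinuousLinearMap.id ℂ (EuclideanSpace ℂ q₂))
    (ψ1 : EuclideanSpace ℂ (q₁ × v₁)) (ψ2 : EuclideanSpace ℂ (q₂ × v₂))
    (hψ1 : ‖ψ1‖ = 1) (hψ2 : ‖ψ2‖ = 1) :
    eqFull (ContinuousLinearMap.id ℂ (EuclideanSpace ℂ q₁)) W (tensVec ψ1 ψ2) =
        tensVec ψ1 ψ2 ↔
      ∃ (ψ1Q : EuclideanSpace ℂ q₁) (ψ1Y : EuclideanSpace ℂ v₁)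
        (ψ2Q : EuclideanSpace ℂ q₂) (ψ2Y : EuclideanSpace ℂ v₂),
        ‖ψ1Q‖ = 1 ∧ ‖ψ1Y‖ = 1 ∧ ‖ψ2Q‖ = 1 ∧ ‖ψ2Y‖ = 1 ∧
        ψ1 = tensVec ψ1Q ψ1Y ∧ ψ2 = tensVec ψ2Q ψ2Y ∧ ψ1Q = W ψ2Q := by
  rw [eqFull_id_tensVec_eq_self_iff]
  constructor
  · intro h
    have hψ1ne : ψ1 ≠ 0 := norm_ne_zero_iff.mp (by rw [hψ1]; exact one_ne_zero)
    have hψ2ne : ψ2 ≠ 0 := norm_ne_zero_iff.mp (by rw [hψ2]; exact one_ne_zero)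
    obtain ⟨x₂, y₁, y₂, rfl, rfl⟩ := exists_tensVec_factors_of_forall_mul_eq W hψ1ne hψ2ne h
    exact exists_unit_factors_of_norm_tensVec_eq_one W
      (W.norm_map_iff_adjoint_comp_self.mpr hW') x₂ y₁ y₂ hψ1 hψ2
  · rintro ⟨ψ1Q, ψ1Y, ψ2Q, ψ2Y, -, -, -, -, rfl, rfl, rfl⟩ i a j b
    have hWW : ContinuousLinearMap.adjoint W (W ψ2Q) = ψ2Q := congrArg (· ψ2Q) hW'
    simp only [opTensCLM_tensVec, hWW, tensVec_apply, ContinuousLinearMap.id_apply]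
    ring

/-- for a unitary `W : Q2 → Q1`, the product `ψ1 ⊗ ψ2` of unit vectors is
fixed by the swap-with-transfer operator `q1 ⊗ v1 ⊗ q2 ⊗ v2 ↦ (W q2) ⊗ v1 ⊗ (W* q1) ⊗ v2`
iff `ψ1, ψ2` factor as `ψ1Q ⊗ ψ1Y`, `ψ2Q ⊗ ψ2Y` (unit vectors) with `ψ1Q = W ψ2Q`. -/
theorem stmt12 {q₁ v₁ q₂ v₂ : Type*}
    [Fintype q₁] [Fintype v₁] [Fintype q₂] [Fintype v₂]
    [DecidableEq q₁] [DecidableEq q₂] [DecidableEq v₁] [DecidableEq v₂]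
    (W : EuclideanSpace ℂ q₂ →L[ℂ] EuclideanSpace ℂ q₁)
    (hW : W.comp (ContinuousLinearMap.adjoint W) =
      ContinuousLinearMap.id ℂ (EuclideanSpace ℂ q₁))
    (hW' : (ContinuousLinearMap.adjoint W).comp W =
      ContinuousLinearMap.id ℂ (EuclideanSpace ℂ q₂))
    (ψ1 : EuclideanSpace ℂ (q₁ × v₁)) (ψ2 : EuclideanSpace ℂ (q₂ × v₂))
    (hψ1 : ‖ψ1‖ = 1) (hψ2 : ‖ψ2‖ = 1) :
    eqFull (ContinuousLinearMap.id ℂ (EuclideanSpace ℂ q₁)) W (tensVec ψ1 ψ2) =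
        tensVec ψ1 ψ2 ↔
      ∃ (ψ1Q : EuclideanSpace ℂ q₁) (ψ1Y : EuclideanSpace ℂ v₁)
        (ψ2Q : EuclideanSpace ℂ q₂) (ψ2Y : EuclideanSpace ℂ v₂),
        ‖ψ1Q‖ = 1 ∧ ‖ψ1Y‖ = 1 ∧ ‖ψ2Q‖ = 1 ∧ ‖ψ2Y‖ = 1 ∧
        ψ1 = tensVec ψ1Q ψ1Y ∧ ψ2 = tensVec ψ2Q ψ2Y ∧ ψ1Q = W ψ2Q :=
  stmt12_general W hW' ψ1 ψ2 hψ1 hψ2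
end

section
/- Let U1 : H1 → Z and U2 : H2 → Z be bounded operators of norm ≤ 1, and set P1 = U1 U1*, P2 = U2 U2* (positive operators of norm ≤ 1 on Z). If a vector ζ ∈ Z satisfies ‖P1 P2 ζ‖ = ‖ζ‖, then P2 ζ = ζ and P1 ζ = ζ. -/
open ContinuousLinearMap in
lemma stmt14_adj_norm {H Z : Type*}
    [NormedAddCommGroup H] [InnerProductSpace ℂ H] [CompleteSpace H]
    [NormedAddCommGroup Z] [InnerProductSpace ℂ Z] [CompleteSpace Z]
    (U : H →L[ℂ] Z) : ‖adjoint U‖ = ‖U‖ :=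
  LinearIsometryEquiv.norm_map adjoint U

open ContinuousLinearMap in
lemma stmt14_key {H Z : Type*}
    [NormedAddCommGroup H] [InnerProductSpace ℂ H] [CompleteSpace H]
    [NormedAddCommGroup Z] [InnerProductSpace ℂ Z] [CompleteSpace Z]
    (U : H →L[ℂ] Z) (hU : ‖U‖ ≤ 1) (ζ : Z)
    (h : ‖(U.comp (adjoint U)) ζ‖ = ‖ζ‖) : (U.comp (adjoint U)) ζ = ζ := by
  set x := (U.comp (adjoint U)) ζ with hx
  have hUadj : ‖adjoint U‖ ≤ 1 := by rw [stmt14_adj_norm]; exact hU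
  -- ‖U* ζ‖ ≥ ‖ζ‖
  have h1 : ‖ζ‖ ≤ ‖(adjoint U) ζ‖ := by
    calc ‖ζ‖ = ‖U ((adjoint U) ζ)‖ := h.symm
    _ ≤ ‖U‖ * ‖(adjoint U) ζ‖ := U.le_opNorm _
    _ ≤ 1 * ‖(adjoint U) ζ‖ := by
        exact mul_le_mul_of_nonneg_right hU (norm_nonneg _)
    _ = ‖(adjoint U) ζ‖ := one_mul _
  -- re ⟨x, ζ⟩ = ‖U* ζ‖²
  have h2 : RCLike.re (inner ℂ x ζ : ℂ) = ‖(adjoint U) ζ‖ ^ 2 := by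
    have : (inner ℂ x ζ : ℂ) = inner ℂ ((adjoint U) ζ) ((adjoint U) ζ) :=
      (ContinuousLinearMap.adjoint_inner_right U ((adjoint U) ζ) ζ).symm
    rw [this, inner_self_eq_norm_sq_to_K]
    norm_cast
  have h3 : RCLike.re (inner ℂ x ζ : ℂ) ≤ ‖x‖ * ‖ζ‖ := re_inner_le_norm x ζ
  have h4 : ‖ζ‖ ^ 2 ≤ RCLike.re (inner ℂ x ζ : ℂ) := by
    rw [h2]; exact pow_le_pow_left₀ (norm_nonneg _) h1 2
  have h5 : RCLike.re (inner ℂ x ζ : ℂ) = ‖ζ‖ ^ 2 := by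
    nlinarith [norm_nonneg ζ, h3, h4, h]
  have : ‖x - ζ‖ ^ 2 = 0 := by
    rw [@norm_sub_sq ℂ, h, h5]
    ring
  have := pow_eq_zero_iff (n := 2) (by norm_num) |>.mp this
  rw [norm_eq_zero] at this
  exact sub_eq_zero.mp this

/-- for `U1, U2` of norm ≤ 1 and `P1 = U1 U1*`, `P2 = U2 U2*`, if
`‖P1 P2 ζ‖ = ‖ζ‖` then `P2 ζ = ζ` and `P1 ζ = ζ`. -/
theorem stmt14 {H₁ H₂ Z : Type*}
    [NormedAddCommGroup H₁] [InnerProductSpace ℂ H₁] [CompleteSpace H₁]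
    [NormedAddCommGroup H₂] [InnerProductSpace ℂ H₂] [CompleteSpace H₂]
    [NormedAddCommGroup Z] [InnerProductSpace ℂ Z] [CompleteSpace Z]
    (U1 : H₁ →L[ℂ] Z) (U2 : H₂ →L[ℂ] Z) (hU1 : ‖U1‖ ≤ 1) (hU2 : ‖U2‖ ≤ 1)
    (ζ : Z)
    (h : ‖(U1.comp (ContinuousLinearMap.adjoint U1))
        ((U2.comp (ContinuousLinearMap.adjoint U2)) ζ)‖ = ‖ζ‖) :
    (U2.comp (ContinuousLinearMap.adjoint U2)) ζ = ζ ∧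
      (U1.comp (ContinuousLinearMap.adjoint U1)) ζ = ζ := by
  set P1 := U1.comp (ContinuousLinearMap.adjoint U1) with hP1
  set P2 := U2.comp (ContinuousLinearMap.adjoint U2) with hP2
  have hP1n : ‖P1‖ ≤ 1 := by
    calc ‖P1‖ ≤ ‖U1‖ * ‖ContinuousLinearMap.adjoint U1‖ := ContinuousLinearMap.opNorm_comp_le _ _
    _ ≤ 1 * 1 := by
        apply mul_le_mul (by exact hU1) _ (norm_nonneg _) zero_le_one
        rw [stmt14_adj_norm]; exact hU1
    _ = 1 := one_mul 1
  have hP2n : ‖P2‖ ≤ 1 := by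
    calc ‖P2‖ ≤ ‖U2‖ * ‖ContinuousLinearMap.adjoint U2‖ := ContinuousLinearMap.opNorm_comp_le _ _
    _ ≤ 1 * 1 := by
        apply mul_le_mul (by exact hU2) _ (norm_nonneg _) zero_le_one
        rw [stmt14_adj_norm]; exact hU2
    _ = 1 := one_mul 1
  have h2 : ‖P2 ζ‖ = ‖ζ‖ := by
    have le1 : ‖ζ‖ ≤ ‖P2 ζ‖ := by
      calc ‖ζ‖ = ‖P1 (P2 ζ)‖ := h.symm
      _ ≤ ‖P1‖ * ‖P2 ζ‖ := P1.le_opNorm _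
      _ ≤ 1 * ‖P2 ζ‖ := mul_le_mul_of_nonneg_right hP1n (norm_nonneg _)
      _ = ‖P2 ζ‖ := one_mul _
    have le2 : ‖P2 ζ‖ ≤ ‖ζ‖ := by
      calc ‖P2 ζ‖ ≤ ‖P2‖ * ‖ζ‖ := P2.le_opNorm _
      _ ≤ 1 * ‖ζ‖ := mul_le_mul_of_nonneg_right hP2n (norm_nonneg _)
      _ = ‖ζ‖ := one_mul _
    linarith
  have hζ2 : P2 ζ = ζ := stmt14_key U2 hU2 ζ h2
  refine ⟨hζ2, ?_⟩
  rw [hζ2] at h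
  exact stmt14_key U1 hU1 ζ h
end

section
/- Uniqueness of quantum equality (finite-dimensional): let T be a finite set, H = ℂ^T, and let E ⊆ H ⊗ H be a subspace such that (a) ψ ⊗ ψ ∈ E for every ψ ∈ H, and (b) for every φ ∈ E, the two partial traces of |φ⟩⟨φ| are equal: Tr_2(|φ⟩⟨φ|) = Tr_1(|φ⟩⟨φ|) (after the canonical identification of the two copies of H). Then E equals the symmetric subspace {φ ∈ H ⊗ H : swap(φ) = φ}. -/
open scoped Kronecker

section Aux

lemma symm_entry {ι κ : Type*} [Fintype ι] [Fintype κ] [DecidableEq κ]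
    (f : EuclideanSpace ℂ κ →ₗ[ℂ] EuclideanSpace ℂ ι) (i : ι) (j : κ) :
    Matrix.toEuclideanLin.symm f i j = f (EuclideanSpace.single j 1) i := by
  conv_rhs => rw [← Matrix.toEuclideanLin.apply_symm_apply f]
  set M := Matrix.toEuclideanLin.symm f
  simp [Matrix.toEuclideanLin_apply, Matrix.mulVec, dotProduct,
    EuclideanSpace.single, WithLp.equiv, Pi.single_apply, mul_ite]

lemma rank_entry {ι : Type*} [Fintype ι] [DecidableEq ι] (φ : EuclideanSpace ℂ ι) (p q : ι) :
    Matrix.toEuclideanLin.symm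
      (rankOneCLM φ : EuclideanSpace ℂ ι →ₗ[ℂ] EuclideanSpace ℂ ι) p q
      = (starRingEnd ℂ) (φ q) * φ p := by
  rw [symm_entry]
  simp [rankOneCLM, EuclideanSpace.inner_single_right, PiLp.smul_apply, smul_eq_mul]

lemma trace_cond {T : Type*} [Fintype T] [DecidableEq T]
    (φ : EuclideanSpace ℂ (T × T))
    (h : ptraceRight (rankOneCLM φ) = ptraceLeft (rankOneCLM φ)) (i j : T) :
    ∑ k, (starRingEnd ℂ) (φ (j, k)) * φ (i, k)
      = ∑ k, (starRingEnd ℂ) (φ (k, j)) * φ (k, i) := by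
  unfold ptraceRight ptraceLeft at h
  have h2 := congrFun (congrFun (Matrix.toEuclideanLin.injective
    (LinearMap.toContinuousLinearMap.injective h)) i) j
  simpa [rank_entry] using h2

lemma expandL {T : Type*} [Fintype T] [DecidableEq T]
    (φ : EuclideanSpace ℂ (T × T)) (c : ℂ) (i j : T) :
    ∑ k, (starRingEnd ℂ) (φ (j, k) + c * (if j = k then 1 else 0))
        * (φ (i, k) + c * (if i = k then 1 else 0))
    = (∑ k, (starRingEnd ℂ) (φ (j, k)) * φ (i, k))
      + (c * (starRingEnd ℂ) (φ (j, i)) + (starRingEnd ℂ) c * φ (i, j)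
        + (starRingEnd ℂ) c * c * (if i = j then 1 else 0)) := by
  simp only [map_add, map_mul, apply_ite (starRingEnd ℂ), map_one, map_zero,
    add_mul, mul_add, Finset.sum_add_distrib, mul_ite, ite_mul, mul_one, mul_zero,
    zero_mul, one_mul, Finset.sum_ite_eq, Finset.sum_ite_eq', Finset.mem_univ, if_true]
  ring_nf
  split_ifs with h1 h2
  · ring
  · exact absurd h1.symm h2
  · next h3 => exact absurd h3.symm h1
  · ring

lemma expandR {T : Type*} [Fintype T] [DecidableEq T]
    (φ : EuclideanSpace ℂ (T × T)) (c : ℂ) (i j : T) :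
    ∑ k, (starRingEnd ℂ) (φ (k, j) + c * (if k = j then 1 else 0))
        * (φ (k, i) + c * (if k = i then 1 else 0))
    = (∑ k, (starRingEnd ℂ) (φ (k, j)) * φ (k, i))
      + (c * (starRingEnd ℂ) (φ (i, j)) + (starRingEnd ℂ) c * φ (j, i)
        + (starRingEnd ℂ) c * c * (if i = j then 1 else 0)) := by
  simp only [map_add, map_mul, apply_ite (starRingEnd ℂ), map_one, map_zero,
    add_mul, mul_add, Finset.sum_add_distrib, mul_ite, ite_mul, mul_one, mul_zero,
    zero_mul, one_mul, Finset.sum_ite_eq, Finset.sum_ite_eq', Finset.mem_univ, if_true]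
  ring_nf

end Aux

/-- uniqueness of quantum equality. A subspace `E ⊆ H ⊗ H` that contains all
`ψ ⊗ ψ` and such that every `φ ∈ E` has equal partial traces of `|φ⟩⟨φ|` is exactly the
symmetric (swap-fixed) subspace. -/
theorem stmt18 {T : Type*} [Fintype T] [DecidableEq T]
    (E : Submodule ℂ (EuclideanSpace ℂ (T × T)))
    (ha : ∀ ψ : EuclideanSpace ℂ T, tensVec ψ ψ ∈ E)
    (hb : ∀ φ ∈ E, ptraceRight (rankOneCLM φ) = ptraceLeft (rankOneCLM φ)) :
    ∀ φ : EuclideanSpace ℂ (T × T),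
      φ ∈ E ↔ reindexCLM (Equiv.prodComm T T) φ = φ := by
  classical
  intro φ
  have Ddef : ∀ p : T × T,
      (WithLp.toLp 2 (fun p : T × T => if p.1 = p.2 then (1:ℂ) else 0) : EuclideanSpace ℂ (T × T)) p
        = if p.1 = p.2 then 1 else 0 := fun _ => rfl
  set D : EuclideanSpace ℂ (T × T) := WithLp.toLp 2 (fun p : T × T => if p.1 = p.2 then (1:ℂ) else 0) with hDset
  have hDE : D ∈ E := by
    have hsum : D = ∑ k : T, tensVec (EuclideanSpace.single k 1) (EuclideanSpace.single k 1) := by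
      ext p
      rw [WithLp.ofLp_sum, Finset.sum_apply]
      simp [tensVec, EuclideanSpace.single_apply, eq_comm, hDset]
    rw [hsum]
    exact Submodule.sum_mem _ fun k _ => ha _
  constructor
  · intro hφ
    have key : ∀ i j : T, φ (i, j) = φ (j, i) := by
      intro i j
      have c0 := trace_cond φ (hb φ hφ) i j
      have hgen : ∀ c : ℂ,
          c * (starRingEnd ℂ) (φ (j, i)) + (starRingEnd ℂ) c * φ (i, j)
            = c * (starRingEnd ℂ) (φ (i, j)) + (starRingEnd ℂ) c * φ (j, i) := by
        intro c
        have hmem : φ + c • D ∈ E := E.add_mem hφ (E.smul_mem c hDE)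
        have hc := trace_cond _ (hb _ hmem) i j
        simp only [PiLp.add_apply, PiLp.smul_apply, smul_eq_mul, hDset] at hc
        rw [expandL, expandR] at hc
        linear_combination hc - c0
      have h1 := hgen 1
      have hI := hgen Complex.I
      simp only [map_one, one_mul, Complex.conj_I] at h1 hI
      have hI' : Complex.I * ((starRingEnd ℂ) (φ (j, i)) - φ (i, j))
          = Complex.I * ((starRingEnd ℂ) (φ (i, j)) - φ (j, i)) := by
        linear_combination hI
      have hI2 := mul_left_cancel₀ Complex.I_ne_zero hI'
      linear_combination (h1 - hI2) / 2
    ext p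
    exact key p.2 p.1
  · intro hswap
    have hsym : ∀ i j : T, φ (j, i) = φ (i, j) := by
      intro i j
      exact congrArg (fun v : EuclideanSpace ℂ (T × T) => v (i, j)) hswap
    have hid : φ = ∑ p : T × T, (φ p / 2) •
        (tensVec (EuclideanSpace.single p.1 1 + EuclideanSpace.single p.2 1)
            (EuclideanSpace.single p.1 1 + EuclideanSpace.single p.2 1)
          - tensVec (EuclideanSpace.single p.1 1) (EuclideanSpace.single p.1 1)
          - tensVec (EuclideanSpace.single p.2 1) (EuclideanSpace.single p.2 1)) := by
      ext q
      obtain ⟨a, b⟩ := q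
      rw [WithLp.ofLp_sum, Finset.sum_apply]
      have hw : ∀ p : T × T,
          (tensVec (EuclideanSpace.single p.1 1 + EuclideanSpace.single p.2 1)
              (EuclideanSpace.single p.1 1 + EuclideanSpace.single p.2 1)
            - tensVec (EuclideanSpace.single p.1 1) (EuclideanSpace.single p.1 1)
            - tensVec (EuclideanSpace.single p.2 1) (EuclideanSpace.single p.2 1)
            : EuclideanSpace ℂ (T × T)) (a, b)
          = (if a = p.1 then (1:ℂ) else 0) * (if b = p.2 then 1 else 0)
            + (if a = p.2 then 1 else 0) * (if b = p.1 then 1 else 0) := by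
        intro p
        simp only [PiLp.sub_apply, tensVec, PiLp.add_apply, EuclideanSpace.single_apply]
        ring
      rw [Finset.sum_congr rfl fun p _ => by rw [PiLp.smul_apply, hw p, smul_eq_mul]]
      simp only [Fintype.sum_prod_type, mul_add, mul_ite, ite_mul, mul_one, mul_zero,
        zero_mul, one_mul, Finset.sum_add_distrib, Finset.sum_ite_eq, Finset.sum_ite_eq',
        Finset.mem_univ, if_true]
      have hsum2 : (∑ x : T, ∑ y : T, if b = x then if a = y then φ (x, y) / 2 else 0 else 0)
          = φ (b, a) / 2 := by
        rw [Finset.sum_eq_single b]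
        · simp [Finset.sum_ite_eq]
        · intro x _ hx
          have : ¬ b = x := fun h => hx h.symm
          simp [this]
        · simp
      rw [hsum2]
      linear_combination (hsym b a) / 2
    rw [hid]
    refine Submodule.sum_mem _ fun p _ => Submodule.smul_mem _ _ ?_
    exact Submodule.sub_mem _ (Submodule.sub_mem _ (ha _) (ha _)) (ha _)
end
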